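/- Let G be a graph, H an attachment set of even size h, and q a kernel eigenvector of G. If the alternating sum C(q) = Σ_{i=1}^{h} (-1)^i q(v_i) equals 0, then q extends to a kernel eigenvector q̃ of altan(G,H) with q̃|_{V(G)} = q and q̃(x_i) = 0 for all i. -/

import Mathlib

/-!
Extend `q` by `0` on the `x_i` and by unknowns `c_i` on the `y_i`. The conditions at the vertices
of `G` and at the `y_i` then hold automatically, and the condition at `x_i` becomes the cyclic
recurrence `c_i + c_{i-1} = -q(v_i)`. Solving it forward from `c_1 = -q(v_1)` makes `c_i` an
alternating partial sum of the `q(v_k)`, and closing the cycle requires exactly `c_h = ±C(q) = 0`.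
-/

open scoped Classical

/-- The nullity of a graph: dimension of the kernel of its real adjacency matrix. -/
noncomputable def nullity {V : Type*} [Fintype V] (G : SimpleGraph V) : ℕ :=
  letI := Classical.decEq V
  letI := Classical.decRel G.Adj
  Module.finrank ℝ ↥(LinearMap.ker (Matrix.toLin' (G.adjMatrix ℝ)))

/-- `q` is a kernel eigenvector of `G`: the sum of `q` over each neighbourhood is `0`. -/
def IsKernelVector {V : Type*} [Fintype V] (G : SimpleGraph V) (q : V → ℝ) : Prop :=
  ∀ v : V, ∑ u : V, (if G.Adj v u then q u else 0) = 0

/-- Underlying relation of the altan construction: vertices are `V ⊕ (Fin h ⊕ Fin h)`,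
where `Sum.inr (Sum.inl i)` is `x_{i+1}` and `Sum.inr (Sum.inr i)` is `y_{i+1}`
(0-indexed versions of the 1-indexed `x_i, y_i`). -/
def altanRel {V : Type*} {h : ℕ} [NeZero h] (G : SimpleGraph V) (H : Fin h → V) :
    (V ⊕ (Fin h ⊕ Fin h)) → (V ⊕ (Fin h ⊕ Fin h)) → Prop
  | Sum.inl u, Sum.inl w => G.Adj u w
  | Sum.inl u, Sum.inr (Sum.inl i) => u = H i
  | Sum.inr (Sum.inl i), Sum.inr (Sum.inr j) => j = i ∨ i = j + 1
  | _, _ => False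

/-- The altan of `(G, H)`. -/
def altan {V : Type*} {h : ℕ} [NeZero h] (G : SimpleGraph V) (H : Fin h → V) :
    SimpleGraph (V ⊕ (Fin h ⊕ Fin h)) :=
  SimpleGraph.fromRel (altanRel G H)

/-- The special vector: `s(y_i) = (-1)^i` (1-indexed), `0` elsewhere. -/
def specialVector (V : Type*) (h : ℕ) : (V ⊕ (Fin h ⊕ Fin h)) → ℝ
  | Sum.inr (Sum.inr j) => (-1 : ℝ) ^ ((j : ℕ) + 1)
  | _ => 0

/-- The induced attachment set `H' = (y_1, ..., y_h)` of the altan. -/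
def inducedAttachment (V : Type*) (h : ℕ) : Fin h → (V ⊕ (Fin h ⊕ Fin h)) :=
  fun i => Sum.inr (Sum.inr i)

open Finset

section CyclicRecurrence

variable {R : Type*} [CommRing R]

def alternatingPartialSum (a : ℕ → R) : ℕ → R
  | 0 => a 0
  | n + 1 => a (n + 1) - alternatingPartialSum a n

lemma neg_one_pow_mul_alternatingPartialSum (a : ℕ → R) (n : ℕ) :
    (-1) ^ n * alternatingPartialSum a n = ∑ k ∈ range (n + 1), (-1) ^ k * a k := by
  induction n with
  | zero => simp [alternatingPartialSum]
  | succ n ih => rw [sum_range_succ, ← ih, alternatingPartialSum]; ring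

open Fin.NatCast in
lemma Fin.exists_add_sub_one_eq_of_alternating_sum_eq_zero {h : ℕ} [NeZero h] (a : Fin h → R)
    (ha : ∑ i : Fin h, (-1) ^ (i : ℕ) * a i = 0) :
    ∃ c : Fin h → R, ∀ i, c i + c (i - 1) = a i := by
  obtain ⟨n, rfl⟩ := Nat.exists_eq_succ_of_ne_zero (NeZero.ne h)
  set s := alternatingPartialSum fun k : ℕ => a k
  have hs : s n = 0 := by
    have := neg_one_pow_mul_alternatingPartialSum (fun k : ℕ => a k) n
    rw [← Fin.sum_univ_eq_sum_range (fun k => (-1) ^ k * a k)] at this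
    simp only [Fin.cast_val_eq_self, ha] at this
    exact (isUnit_neg_one.pow n).mul_right_eq_zero.mp this
  refine ⟨fun i => s i, Fin.cases ?_ fun j => ?_⟩
  · simp [hs, s, alternatingPartialSum]
  · rw [← Fin.coeSucc_eq_succ, add_sub_cancel_right]
    simp [s, alternatingPartialSum]

end CyclicRecurrence

lemma Fintype.sum_ite_eq_or_eq {ι M : Type*} [Fintype ι] [DecidableEq ι] [AddCommMonoid M]
    {a b : ι} (hab : a ≠ b) (g : ι → M) :
    ∑ j, (if j = a ∨ j = b then g j else 0) = g a + g b := by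
  rw [← sum_filter, ← sum_pair hab]
  congr
  ext
  simp

section Altan

variable {V : Type*} {h : ℕ} [NeZero h] {G : SimpleGraph V} {H : Fin h → V}

@[simp]
lemma altan_adj_inl_inl {u w : V} : (altan G H).Adj (.inl u) (.inl w) ↔ G.Adj u w := by
  simp only [altan, SimpleGraph.fromRel_adj, altanRel, ne_eq, Sum.inl.injEq]
  exact ⟨fun ⟨_, hA⟩ => hA.elim id .symm, fun hA => ⟨hA.ne, .inl hA⟩⟩

@[simp]
lemma altan_adj_inl_x {u : V} {i : Fin h} :
    (altan G H).Adj (.inl u) (.inr (.inl i)) ↔ u = H i := by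
  simp [altan, altanRel]

@[simp]
lemma altan_adj_x_y {i j : Fin h} :
    (altan G H).Adj (.inr (.inl i)) (.inr (.inr j)) ↔ j = i ∨ i = j + 1 := by
  simp [altan, altanRel]

@[simp]
lemma altan_not_adj_inl_y {u : V} {j : Fin h} : ¬ (altan G H).Adj (.inl u) (.inr (.inr j)) := by
  simp [altan, altanRel]

@[simp]
lemma altan_not_adj_x_x {i i' : Fin h} : ¬ (altan G H).Adj (.inr (.inl i)) (.inr (.inl i')) := by
  simp [altan, altanRel]

@[simp]
lemma altan_not_adj_y_y {j j' : Fin h} : ¬ (altan G H).Adj (.inr (.inr j)) (.inr (.inr j')) := by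
  simp [altan, altanRel]

variable [Fintype V] (f : V ⊕ (Fin h ⊕ Fin h) → ℝ)

lemma altan_sum_adj_inl (u : V) :
    ∑ v, (if (altan G H).Adj (.inl u) v then f v else 0) =
      ∑ w, (if G.Adj u w then f (.inl w) else 0) +
        ∑ i, (if u = H i then f (.inr (.inl i)) else 0) := by
  simp [Fintype.sum_sum_type]

lemma altan_sum_adj_x (hh : 2 ≤ h) (i : Fin h) :
    ∑ v, (if (altan G H).Adj (.inr (.inl i)) v then f v else 0) =
      f (.inl (H i)) + (f (.inr (.inr i)) + f (.inr (.inr (i - 1)))) := by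
  have hi : i ≠ i - 1 := Ne.symm (by simp only [ne_eq, sub_eq_self, Fin.one_eq_zero_iff]; omega)
  have hadj : ∀ j, (altan G H).Adj (.inr (.inl i)) (.inr (.inr j)) ↔ j = i ∨ j = i - 1 := by
    simp [eq_sub_iff_add_eq, eq_comm (a := i)]
  simp only [Fintype.sum_sum_type, hadj, Fintype.sum_ite_eq_or_eq hi]
  simp [(altan G H).adj_comm (.inr _) (.inl _)]

lemma altan_sum_adj_y (hh : 2 ≤ h) (j : Fin h) :
    ∑ v, (if (altan G H).Adj (.inr (.inr j)) v then f v else 0) =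
      f (.inr (.inl j)) + f (.inr (.inl (j + 1))) := by
  have hj : j ≠ j + 1 := by simp only [ne_eq, left_eq_add, Fin.one_eq_zero_iff]; omega
  have hadj : ∀ i, (altan G H).Adj (.inr (.inr j)) (.inr (.inl i)) ↔ i = j ∨ i = j + 1 := by
    simp [(altan G H).adj_comm (.inr (.inr j)), eq_comm (a := j)]
  simp only [Fintype.sum_sum_type, hadj, Fintype.sum_ite_eq_or_eq hj]
  simp [(altan G H).adj_comm (.inr (.inr j)) (.inl _)]

end Altan

theorem stmt9_general {V : Type*} [Fintype V] {h : ℕ} [NeZero h] (hh : 2 ≤ h)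
    (G : SimpleGraph V) (H : Fin h → V) (q : V → ℝ)
    (hq : IsKernelVector G q)
    (hC : ∑ i : Fin h, (-1 : ℝ) ^ ((i : ℕ) + 1) * q (H i) = 0) :
    ∃ q' : (V ⊕ (Fin h ⊕ Fin h)) → ℝ,
      IsKernelVector (altan G H) q' ∧ (∀ u : V, q' (Sum.inl u) = q u) ∧
        ∀ i : Fin h, q' (Sum.inr (Sum.inl i)) = 0 := by
  obtain ⟨c, hc⟩ := Fin.exists_add_sub_one_eq_of_alternating_sum_eq_zero (fun i => -q (H i))
    (by simpa [pow_succ] using hC)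
  refine ⟨Sum.elim q (Sum.elim 0 c), ?_, fun _ => rfl, fun _ => rfl⟩
  rintro (u | i | j)
  · simpa [altan_sum_adj_inl] using hq u
  · simp [altan_sum_adj_x _ hh, hc]
  · simp [altan_sum_adj_y _ hh]

/-- for even attachment size, a kernel eigenvector `q` of `G` with vanishing
alternating sum `C(q) = Σ (-1)^i q(v_i) = 0` extends to a kernel eigenvector of the altan
that vanishes on all `x_i`. -/
theorem stmt9 {V : Type*} [Fintype V] {h : ℕ} [NeZero h] (hh : 2 ≤ h) (heven : Even h)
    (G : SimpleGraph V) (H : Fin h → V) (q : V → ℝ)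
    (hq : IsKernelVector G q)
    (hC : ∑ i : Fin h, (-1 : ℝ) ^ ((i : ℕ) + 1) * q (H i) = 0) :
    ∃ q' : (V ⊕ (Fin h ⊕ Fin h)) → ℝ,
      IsKernelVector (altan G H) q' ∧ (∀ u : V, q' (Sum.inl u) = q u) ∧
        ∀ i : Fin h, q' (Sum.inr (Sum.inl i)) = 0 :=
  stmt9_general hh G H q hq hC
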